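/- Let x, y ∈ B̂^× and v, w ∈ V. Assume that Cl(R) is finite, that every Γ_z (z ∈ B̂^×) is finite, and that every set Γ_{x,z} and Γ_{y,z} (z ∈ B̂^×) is finite, so that φ_{x,v}, φ_{y,w} and the height pairing are defined. Then ⟨⟨φ_{x,v}, φ_{y,w}⟩⟩ = Σ_{γ ∈ Γ_{x,y}} ⟨v·γ, w⟩. -/

import Mathlib

open NumberField Quaternion IsDedekindDomain

noncomputable section

/-- The finite adele ring of a number field. -/
abbrev Adeles (F : Type*) [Field F] [NumberField F] : Type _ :=
  FiniteAdeleRing (𝓞 F) F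

/-- The adelization `B ⊗_F 𝔸`, modelled as a quaternion algebra over the adeles. -/
abbrev Bhat (F : Type*) [Field F] [NumberField F] (a b : F) : Type _ :=
  ℍ[Adeles F, algebraMap F (Adeles F) a, algebraMap F (Adeles F) b]

/-- The canonical quaternionic basis of `Bhat`. -/
def quatBasis (F : Type*) [Field F] [NumberField F] (a b : F) :
    QuaternionAlgebra.Basis (Bhat F a b) a 0 b where
  i := ⟨0, 1, 0, 0⟩
  j := ⟨0, 0, 1, 0⟩
  k := ⟨0, 0, 0, 1⟩
  i_mul_i := by
    ext <;> simp [QuaternionAlgebra.ext_iff, Algebra.smul_def] <;> rfl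
  j_mul_j := by
    ext <;> simp [QuaternionAlgebra.ext_iff, Algebra.smul_def] <;> rfl
  i_mul_j := by
    ext <;> simp
  j_mul_i := by
    ext <;> simp

/-- The canonical embedding `B → B̂`. -/
def iotaB (F : Type*) [Field F] [NumberField F] (a b : F) :
    ℍ[F, a, b] →ₐ[F] Bhat F a b :=
  (quatBasis F a b).liftHom

/-- The integral adeles `Ô` inside the finite adeles. -/
def intAdeles (F : Type*) [Field F] [NumberField F] : Set (Adeles F) :=
  {x | ∀ v : HeightOneSpectrum (𝓞 F), x v ∈ v.adicCompletionIntegers F}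

variable {F : Type*} [Field F] [NumberField F] {a b : F}

/-- `R̂`, the image of `R ⊗_𝒪 Ô` in `B̂`. -/
def Rhat (R : Subring ℍ[F, a, b]) : Subring (Bhat F a b) :=
  Subring.closure
    {z | ∃ r ∈ R, ∃ o ∈ intAdeles F,
      z = algebraMap (Adeles F) (Bhat F a b) o * iotaB F a b r}

/-- `R̂ˣ` as a subgroup of `B̂ˣ`. -/
def Uhat (R : Subring ℍ[F, a, b]) : Subgroup (Bhat F a b)ˣ :=
  (Units.map (Rhat R).subtype.toMonoidHom).range

/-- The embedding `B^× → B̂^×`. -/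
def gmap (F : Type*) [Field F] [NumberField F] (a b : F) :
    ℍ[F, a, b]ˣ →* (Bhat F a b)ˣ :=
  Units.map (iotaB F a b).toRingHom.toMonoidHom

/-- `𝒪^×` as a subgroup of `B^×`. -/
def OunitsB (F : Type*) [Field F] [NumberField F] (a b : F) : Subgroup ℍ[F, a, b]ˣ :=
  (Units.map ((algebraMap F ℍ[F, a, b]).comp (algebraMap (𝓞 F) F)).toMonoidHom).range

/-- The set `B^× ∩ x⁻¹ R̂^× y` (inside `B^×`). -/
def GammaSet (R : Subring ℍ[F, a, b]) (x y : (Bhat F a b)ˣ) : Set ℍ[F, a, b]ˣ :=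
  {γ | ∃ u ∈ Uhat R, gmap F a b γ = x⁻¹ * u * y}

/-- `T` is a (finite) set of representatives for `Γ_{x,y} = (B^× ∩ x⁻¹ R̂^× y)/𝒪^×`. -/
def IsGammaReps (R : Subring ℍ[F, a, b]) (x y : (Bhat F a b)ˣ)
    (T : Finset ℍ[F, a, b]ˣ) : Prop :=
  ↑T ⊆ GammaSet R x y ∧
    ∀ γ ∈ GammaSet R x y, ∃! γ' : ℍ[F, a, b]ˣ,
      γ' ∈ T ∧ ∃ ε ∈ OunitsB F a b, γ = γ' * ε

variable {V : Type*} [AddCommGroup V] [Module ℂ V]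

/-- `(V, act)` is a unitary right representation of `B^×/F^×`. -/
def IsWeightRep (F : Type*) [Field F] [NumberField F] (a b : F)
    (act : V → ℍ[F, a, b]ˣ → V) : Prop :=
  (∀ v, act v 1 = v) ∧
  (∀ v γ₁ γ₂, act (act v γ₁) γ₂ = act v (γ₁ * γ₂)) ∧
  (∀ γ, IsLinearMap ℂ (fun v => act v γ)) ∧
  (∀ (v : V) (c : Fˣ), act v (Units.map (algebraMap F ℍ[F, a, b]).toMonoidHom c) = v)

/-- `φ` is the quaternionic modular form `φ_{x,v}`. -/
def IsPhi (R : Subring ℍ[F, a, b]) (act : V → ℍ[F, a, b]ˣ → V)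
    (x : (Bhat F a b)ˣ) (v : V) (φ : (Bhat F a b)ˣ → V) : Prop :=
  ∀ y : (Bhat F a b)ˣ, ∃ T : Finset ℍ[F, a, b]ˣ,
    IsGammaReps R x y T ∧ φ y = ∑ γ ∈ T, act v γ

/-- `φ` is a quaternionic modular form of weight `act` and level `R`. -/
def IsQMF (R : Subring ℍ[F, a, b]) (act : V → ℍ[F, a, b]ˣ → V)
    (φ : (Bhat F a b)ˣ → V) : Prop :=
  ∀ u ∈ Uhat R, ∀ (γ : ℍ[F, a, b]ˣ) (y : (Bhat F a b)ˣ),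
    φ (u * y * gmap F a b γ) = act (φ y) γ

/-- `z` normalizes `R̂`. -/
def Normalizes (R : Subring ℍ[F, a, b]) (z : (Bhat F a b)ˣ) : Prop :=
  (fun w => ((z⁻¹ : (Bhat F a b)ˣ) : Bhat F a b) * w * (z : Bhat F a b)) ''
      ((Rhat R : Set (Bhat F a b))) = (Rhat R : Set (Bhat F a b))

/-- The order `R_x = B ∩ x⁻¹ R̂ x`. -/
def Rx (R : Subring ℍ[F, a, b]) (x : (Bhat F a b)ˣ) : Set ℍ[F, a, b] :=
  {w | ∃ r ∈ Rhat R, iotaB F a b w = ((x⁻¹ : (Bhat F a b)ˣ) : Bhat F a b) * r * (x : Bhat F a b)}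

/-- The unit group `R_x^×` inside `B^×`. -/
def RxUnits (R : Subring ℍ[F, a, b]) (x : (Bhat F a b)ˣ) : Set ℍ[F, a, b]ˣ :=
  {γ | ((γ : ℍ[F, a, b]) ∈ Rx R x) ∧ (((γ⁻¹ : ℍ[F, a, b]ˣ) : ℍ[F, a, b]) ∈ Rx R x)}

/-- `T` is a set of representatives for `Γ_x = R_x^×/𝒪^×`; in particular `t_x = T.card`. -/
def IsStabReps (R : Subring ℍ[F, a, b]) (x : (Bhat F a b)ˣ)
    (T : Finset ℍ[F, a, b]ˣ) : Prop :=
  ↑T ⊆ RxUnits R x ∧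
    ∀ γ ∈ RxUnits R x, ∃! γ' : ℍ[F, a, b]ˣ,
      γ' ∈ T ∧ ∃ ε ∈ OunitsB F a b, γ = γ' * ε

/-- `xs` is a set of representatives for `Cl(R) = R̂^× \ B̂^× / B^×`. -/
def IsClassReps (R : Subring ℍ[F, a, b]) (xs : Finset (Bhat F a b)ˣ) : Prop :=
  ∀ y : (Bhat F a b)ˣ, ∃! x : (Bhat F a b)ˣ,
    x ∈ xs ∧ ∃ u ∈ Uhat R, ∃ γ : ℍ[F, a, b]ˣ, y = u * x * gmap F a b γ

/-- The reduced norm of a quaternion over a commutative ring. -/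
def nrd {R : Type*} [CommRing R] {c₁ c₂ : R} (x : ℍ[R, c₁, c₂]) : R :=
  x.re ^ 2 - c₁ * x.imI ^ 2 - c₂ * x.imJ ^ 2 + c₁ * c₂ * x.imK ^ 2

/-- The set `H_𝔪 = {h ∈ B̂^× ∩ R̂ : Ô·n(h) ∩ 𝒪 = 𝔪}`. -/
def Hset (R : Subring ℍ[F, a, b]) (𝔪 : Ideal (𝓞 F)) : Set (Bhat F a b)ˣ :=
  {h | ((h : Bhat F a b) ∈ Rhat R) ∧
    {c : 𝓞 F | ∃ o ∈ intAdeles F,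
        algebraMap F (Adeles F) (algebraMap (𝓞 F) F c) = o * nrd (h : Bhat F a b)}
      = (𝔪 : Set (𝓞 F))}

/-- `T` is a set of representatives for the left cosets `R̂^× \ H_𝔪`. -/
def IsHeckeLeftReps (R : Subring ℍ[F, a, b]) (𝔪 : Ideal (𝓞 F))
    (T : Finset (Bhat F a b)ˣ) : Prop :=
  ↑T ⊆ Hset R 𝔪 ∧
    ∀ h ∈ Hset R 𝔪, ∃! h' : (Bhat F a b)ˣ, h' ∈ T ∧ ∃ u ∈ Uhat R, h = u * h'

/-- `T` is a set of representatives for the right cosets `H_𝔪 / R̂^×`. -/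
def IsHeckeRightReps (R : Subring ℍ[F, a, b]) (𝔪 : Ideal (𝓞 F))
    (T : Finset (Bhat F a b)ˣ) : Prop :=
  ↑T ⊆ Hset R 𝔪 ∧
    ∀ h ∈ Hset R 𝔪, ∃! h' : (Bhat F a b)ˣ, h' ∈ T ∧ ∃ u ∈ Uhat R, h = h' * u

end

/-!
Since `Γ_{y,z}` is empty unless `z` lies in the class of `y`, only that class contributes to the
height pairing. There, for each `β ∈ Γ_{y,z}`, right multiplication by `β⁻¹` carries `Γ_{x,z}` onto
`Γ_{x,y}` (modulo the central `𝒪^×`), and unitarity gives `⟨v·α, w·β⟩ = ⟨v·αβ⁻¹, w⟩`; hence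
`⟨φ_{x,v}(z), φ_{y,w}(z)⟩ = #Γ_{y,z} · Σ_{γ ∈ Γ_{x,y}} ⟨v·γ, w⟩`. Left multiplication by a fixed
`β₀ ∈ Γ_{y,z}` carries `Γ_z = Γ_{z,z}` onto `Γ_{y,z}`, so `#Γ_{y,z} = t_z` cancels the weight.
-/

-- `IsGammaReps` and `IsStabReps` unfold to instances of this.
def IsRepsModulo {G : Type*} [Group G] (O : Subgroup G) (A : Set G) (S : Finset G) : Prop :=
  ↑S ⊆ A ∧ ∀ γ ∈ A, ∃! γ' : G, γ' ∈ S ∧ ∃ ε ∈ O, γ = γ' * ε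

namespace IsRepsModulo

variable {G : Type*} [Group G] {O : Subgroup G} {A : Set G} {S T : Finset G}

theorem injOn_mk (hS : IsRepsModulo O A S) : Set.InjOn (QuotientGroup.mk : G → G ⧸ O) S := by
  intro α hα α' hα' h
  have hO : α'⁻¹ * α ∈ O := by simpa using O.inv_mem (QuotientGroup.eq.mp h)
  obtain ⟨γ, -, huniq⟩ := hS.2 α (hS.1 hα)
  rw [huniq α ⟨hα, 1, O.one_mem, (mul_one α).symm⟩,
    huniq α' ⟨hα', α'⁻¹ * α, hO, by group⟩]

theorem image_mk (hS : IsRepsModulo O A S) :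
    (QuotientGroup.mk : G → G ⧸ O) '' S = QuotientGroup.mk '' A := by
  refine (Set.image_mono hS.1).antisymm ?_
  rintro _ ⟨γ, hγ, rfl⟩
  obtain ⟨γ', ⟨hγ'S, ε, hε, rfl⟩, -⟩ := hS.2 γ hγ
  exact ⟨γ', hγ'S, QuotientGroup.eq.mpr (by simpa using hε)⟩

theorem sum_eq {M : Type*} [AddCommMonoid M] (hS : IsRepsModulo O A S)
    (hT : IsRepsModulo O A T) (h : G → M) (hh : ∀ γ, ∀ ε ∈ O, h (γ * ε) = h γ) :
    ∑ γ ∈ S, h γ = ∑ γ ∈ T, h γ := by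
  classical
  let h' : G ⧸ O → M := Quotient.lift h fun α β hαβ => by
    rw [← hh α _ (QuotientGroup.leftRel_apply.mp hαβ), mul_inv_cancel_left]
  have himage : S.image QuotientGroup.mk = T.image (QuotientGroup.mk : G → G ⧸ O) :=
    Finset.coe_injective (by simpa using hS.image_mk.trans hT.image_mk.symm)
  calc ∑ γ ∈ S, h γ = ∑ q ∈ S.image QuotientGroup.mk, h' q :=
        (Finset.sum_image (f := h') hS.injOn_mk).symm
    _ = ∑ q ∈ T.image QuotientGroup.mk, h' q := by rw [himage]
    _ = ∑ γ ∈ T, h γ := Finset.sum_image (f := h') hT.injOn_mk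

theorem card_eq (hS : IsRepsModulo O A S) (hT : IsRepsModulo O A T) : S.card = T.card := by
  rw [Finset.card_eq_sum_ones, Finset.card_eq_sum_ones]
  exact hS.sum_eq hT _ fun _ _ _ => rfl

theorem image [DecidableEq G] (hS : IsRepsModulo O A S) {f : G → G} (hf : Function.Injective f)
    (hfO : ∀ γ, ∀ ε ∈ O, f (γ * ε) = f γ * ε) : IsRepsModulo O (f '' A) (S.image f) := by
  refine ⟨by simpa using Set.image_mono hS.1, ?_⟩
  rintro _ ⟨γ, hγ, rfl⟩
  obtain ⟨γ', ⟨hγ'S, ε, hε, rfl⟩, huniq⟩ := hS.2 γ hγ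
  refine ⟨f γ', ⟨Finset.mem_image_of_mem f hγ'S, ε, hε, hfO γ' ε hε⟩, ?_⟩
  rintro _ ⟨hδ, ε', hε', heq⟩
  obtain ⟨s, hs, rfl⟩ := Finset.mem_image.mp hδ
  rw [huniq s ⟨hs, ε', hε', hf (by rw [hfO _ _ hε', heq])⟩]

theorem image_mul_left [DecidableEq G] (hS : IsRepsModulo O A S) (m : G) :
    IsRepsModulo O ((m * ·) '' A) (S.image (m * ·)) :=
  hS.image (mul_right_injective m) fun γ ε _ => (mul_assoc m γ ε).symm

theorem image_mul_right [DecidableEq G] (hS : IsRepsModulo O A S) (hO : O ≤ Subgroup.center G)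
    (k : G) : IsRepsModulo O ((· * k) '' A) (S.image (· * k)) :=
  hS.image (mul_left_injective k) fun γ ε hε => by
    rw [mul_assoc, ← Subgroup.mem_center_iff.mp (hO hε) k, mul_assoc]

end IsRepsModulo

section Quaternionic

variable {F : Type*} [Field F] [NumberField F] {a b : F} {R : Subring ℍ[F, a, b]}

theorem OunitsB_le_center : OunitsB F a b ≤ Subgroup.center ℍ[F, a, b]ˣ := by
  rintro _ ⟨c, rfl⟩
  exact Subgroup.mem_center_iff.mpr fun γ =>
    Units.ext (Algebra.commutes ((c : 𝓞 F) : F) (γ : ℍ[F, a, b])).symm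

theorem IsWeightRep.act_mul_of_mem_OunitsB {V : Type*} [AddCommGroup V] [Module ℂ V]
    {act : V → ℍ[F, a, b]ˣ → V} (hact : IsWeightRep F a b act) (v : V) (γ : ℍ[F, a, b]ˣ)
    {ε : ℍ[F, a, b]ˣ} (hε : ε ∈ OunitsB F a b) : act v (γ * ε) = act v γ := by
  obtain ⟨c, rfl⟩ := hε
  rw [← hact.2.1]
  exact hact.2.2.2 _ (Units.map (algebraMap (𝓞 F) F).toMonoidHom c)

theorem mem_Uhat_iff {u : (Bhat F a b)ˣ} :
    u ∈ Uhat R ↔ (u : Bhat F a b) ∈ Rhat R ∧ ((u⁻¹ : (Bhat F a b)ˣ) : Bhat F a b) ∈ Rhat R := by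
  constructor
  · rintro ⟨w, rfl⟩
    exact ⟨(w : Rhat R).2, by rw [← map_inv]; exact ((w⁻¹ : (Rhat R)ˣ) : Rhat R).2⟩
  · rintro ⟨hu, hu'⟩
    exact ⟨⟨⟨u, hu⟩, ⟨_, hu'⟩, Subtype.ext u.mul_inv, Subtype.ext u.inv_mul⟩, Units.ext rfl⟩

theorem mem_Rx_iff {x : (Bhat F a b)ˣ} {q : ℍ[F, a, b]} :
    q ∈ Rx R x ↔
      (x : Bhat F a b) * iotaB F a b q * ((x⁻¹ : (Bhat F a b)ˣ) : Bhat F a b) ∈ Rhat R := by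
  constructor
  · rintro ⟨r, hr, h⟩
    simpa [h, mul_assoc] using hr
  · exact fun h => ⟨_, h, by simp [mul_assoc]⟩

theorem mem_GammaSet_iff {x y : (Bhat F a b)ˣ} {γ : ℍ[F, a, b]ˣ} :
    γ ∈ GammaSet R x y ↔ x * gmap F a b γ * y⁻¹ ∈ Uhat R := by
  constructor
  · rintro ⟨u, hu, h⟩
    simpa [h, mul_assoc] using hu
  · exact fun h => ⟨_, h, by group⟩

theorem RxUnits_eq_GammaSet (z : (Bhat F a b)ˣ) : RxUnits R z = GammaSet R z z := by
  ext γ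
  simp [RxUnits, mem_Rx_iff, mem_GammaSet_iff, mem_Uhat_iff, gmap, mul_assoc]

theorem GammaSet.mul_mem {x y z : (Bhat F a b)ˣ} {γ β : ℍ[F, a, b]ˣ} (hγ : γ ∈ GammaSet R x y)
    (hβ : β ∈ GammaSet R y z) : γ * β ∈ GammaSet R x z := by
  obtain ⟨u, hu, hγ⟩ := hγ
  obtain ⟨u', hu', hβ⟩ := hβ
  exact ⟨u * u', (Uhat R).mul_mem hu hu', by rw [map_mul, hγ, hβ]; group⟩

theorem GammaSet.inv_mem {x y : (Bhat F a b)ˣ} {γ : ℍ[F, a, b]ˣ} (hγ : γ ∈ GammaSet R x y) :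
    γ⁻¹ ∈ GammaSet R y x := by
  obtain ⟨u, hu, hγ⟩ := hγ
  exact ⟨u⁻¹, (Uhat R).inv_mem hu, by rw [map_inv, hγ]; group⟩

theorem GammaSet.image_mul_left {x y z : (Bhat F a b)ˣ} {β : ℍ[F, a, b]ˣ}
    (hβ : β ∈ GammaSet R x y) : (β * ·) '' GammaSet R y z = GammaSet R x z := by
  refine Set.Subset.antisymm (Set.image_subset_iff.mpr fun γ hγ => GammaSet.mul_mem hβ hγ)
    fun δ hδ => ?_
  exact ⟨β⁻¹ * δ, GammaSet.mul_mem (GammaSet.inv_mem hβ) hδ, mul_inv_cancel_left β δ⟩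

theorem GammaSet.image_mul_inv_right {x y z : (Bhat F a b)ˣ} {β : ℍ[F, a, b]ˣ}
    (hβ : β ∈ GammaSet R y z) : (· * β⁻¹) '' GammaSet R x z = GammaSet R x y := by
  refine Set.Subset.antisymm
    (Set.image_subset_iff.mpr fun γ hγ => GammaSet.mul_mem hγ (GammaSet.inv_mem hβ)) fun δ hδ => ?_
  exact ⟨δ * β, GammaSet.mul_mem hδ hβ, mul_inv_cancel_right δ β⟩

theorem inv_mem_GammaSet_iff {y z : (Bhat F a b)ˣ} {γ : ℍ[F, a, b]ˣ} :
    γ⁻¹ ∈ GammaSet R y z ↔ ∃ u ∈ Uhat R, y = u * z * gmap F a b γ := by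
  rw [mem_GammaSet_iff, map_inv]
  refine ⟨fun h => ⟨_, h, by group⟩, ?_⟩
  rintro ⟨u, hu, rfl⟩
  simpa [mul_assoc] using hu

theorem IsClassReps.exists_mem_GammaSet {xs : Finset (Bhat F a b)ˣ} (hcl : IsClassReps R xs)
    (y : (Bhat F a b)ˣ) : ∃ z ∈ xs, ∃ β, β ∈ GammaSet R y z := by
  obtain ⟨z, ⟨hz, u, hu, γ, hy⟩, -⟩ := hcl y
  exact ⟨z, hz, γ⁻¹, inv_mem_GammaSet_iff.mpr ⟨u, hu, hy⟩⟩

theorem IsClassReps.eq_of_mem_GammaSet {xs : Finset (Bhat F a b)ˣ} (hcl : IsClassReps R xs)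
    {y z z' : (Bhat F a b)ˣ} {β β' : ℍ[F, a, b]ˣ} (hz : z ∈ xs) (hz' : z' ∈ xs)
    (hβ : β ∈ GammaSet R y z) (hβ' : β' ∈ GammaSet R y z') : z = z' := by
  rw [← inv_inv β, inv_mem_GammaSet_iff] at hβ
  rw [← inv_inv β', inv_mem_GammaSet_iff] at hβ'
  obtain ⟨u, hu, hy⟩ := hβ
  obtain ⟨u', hu', hy'⟩ := hβ'
  exact (hcl y).unique ⟨hz, u, hu, _, hy⟩ ⟨hz', u', hu', _, hy'⟩

end Quaternionic

section Hermitian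

variable {ι V : Type*} [AddCommGroup V] {herm : V → V → ℂ}

theorem herm_sum_left (herm_add : ∀ v₁ v₂ w : V, herm (v₁ + v₂) w = herm v₁ w + herm v₂ w)
    (s : Finset ι) (f : ι → V) (w : V) : herm (∑ i ∈ s, f i) w = ∑ i ∈ s, herm (f i) w :=
  map_sum (AddMonoidHom.mk' (herm · w) fun v₁ v₂ => herm_add v₁ v₂ w) f s

theorem herm_sum_right (herm_add : ∀ v₁ v₂ w : V, herm (v₁ + v₂) w = herm v₁ w + herm v₂ w)
    (herm_conj : ∀ v w : V, herm w v = starRingEnd ℂ (herm v w))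
    (v : V) (s : Finset ι) (f : ι → V) : herm v (∑ i ∈ s, f i) = ∑ i ∈ s, herm v (f i) := by
  simp only [herm_conj _ v, herm_sum_left herm_add, map_sum]

end Hermitian

section HeightPairing

variable {F : Type*} [Field F] [NumberField F] {a b : F} {R : Subring ℍ[F, a, b]}
  {V : Type*} [AddCommGroup V] [Module ℂ V] {act : V → ℍ[F, a, b]ˣ → V} {herm : V → V → ℂ}

theorem sum_herm_act_eq (hact : IsWeightRep F a b act)
    (herm_unitary : ∀ (v w : V) (γ : ℍ[F, a, b]ˣ), herm (act v γ) (act w γ) = herm v w)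
    {x y z : (Bhat F a b)ˣ} {S T : Finset ℍ[F, a, b]ˣ} (hS : IsGammaReps R x z S)
    (hT : IsGammaReps R x y T) {β : ℍ[F, a, b]ˣ} (hβ : β ∈ GammaSet R y z) (v w : V) :
    ∑ α ∈ S, herm (act v α) (act w β) = ∑ γ ∈ T, herm (act v γ) w := by
  classical
  have hSβ : IsRepsModulo (OunitsB F a b) (GammaSet R x y) (S.image (· * β⁻¹)) := by
    rw [← GammaSet.image_mul_inv_right hβ]
    exact IsRepsModulo.image_mul_right hS OunitsB_le_center β⁻¹
  calc ∑ α ∈ S, herm (act v α) (act w β) = ∑ α ∈ S, herm (act v (α * β⁻¹)) w := by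
        refine Finset.sum_congr rfl fun α _ => ?_
        rw [← herm_unitary _ w β, hact.2.1, inv_mul_cancel_right]
    _ = ∑ γ ∈ S.image (· * β⁻¹), herm (act v γ) w :=
        (Finset.sum_image (f := fun γ => herm (act v γ) w) fun _ _ _ _ => mul_right_cancel).symm
    _ = ∑ γ ∈ T, herm (act v γ) w :=
        hSβ.sum_eq hT _ fun γ _ hε => by rw [hact.act_mul_of_mem_OunitsB v γ hε]

theorem IsGammaReps.card_eq_of_isStabReps {y z : (Bhat F a b)ˣ} {S T : Finset ℍ[F, a, b]ˣ}
    (hS : IsGammaReps R y z S) (hT : IsStabReps R z T) {β : ℍ[F, a, b]ˣ}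
    (hβ : β ∈ GammaSet R y z) : S.card = T.card := by
  classical
  have hβT : IsRepsModulo (OunitsB F a b) (GammaSet R y z) (T.image (β * ·)) := by
    rw [← GammaSet.image_mul_left (z := z) hβ, ← RxUnits_eq_GammaSet]
    exact IsRepsModulo.image_mul_left hT β
  rw [IsRepsModulo.card_eq hS hβT, Finset.card_image_of_injective _ (mul_right_injective β)]

theorem IsStabReps.nonempty {z : (Bhat F a b)ˣ} {T : Finset ℍ[F, a, b]ˣ}
    (hT : IsStabReps R z T) : T.Nonempty := by
  have hone : 1 ∈ RxUnits R z := by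
    rw [RxUnits_eq_GammaSet, mem_GammaSet_iff, map_one, mul_one, mul_inv_cancel]
    exact (Uhat R).one_mem
  obtain ⟨γ, ⟨hγ, -⟩, -⟩ := hT.2 1 hone
  exact ⟨γ, hγ⟩

theorem herm_apply_eq_card_mul (hact : IsWeightRep F a b act)
    (herm_add : ∀ v₁ v₂ w : V, herm (v₁ + v₂) w = herm v₁ w + herm v₂ w)
    (herm_conj : ∀ v w : V, herm w v = starRingEnd ℂ (herm v w))
    (herm_unitary : ∀ (v w : V) (γ : ℍ[F, a, b]ˣ), herm (act v γ) (act w γ) = herm v w)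
    {x y z : (Bhat F a b)ˣ} {v w : V} {φx φy : (Bhat F a b)ˣ → V}
    (hφx : IsPhi R act x v φx) (hφy : IsPhi R act y w φy)
    {S T : Finset ℍ[F, a, b]ˣ} (hS : IsGammaReps R y z S) (hT : IsGammaReps R x y T) :
    herm (φx z) (φy z) = S.card * ∑ γ ∈ T, herm (act v γ) w := by
  obtain ⟨Sx, hSx, hφxz⟩ := hφx z
  obtain ⟨Sy, hSy, hφyz⟩ := hφy z
  calc herm (φx z) (φy z) = ∑ β ∈ Sy, ∑ α ∈ Sx, herm (act v α) (act w β) := by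
        simp only [hφxz, hφyz, herm_sum_right herm_add herm_conj, herm_sum_left herm_add]
    _ = ∑ β ∈ Sy, ∑ γ ∈ T, herm (act v γ) w :=
        Finset.sum_congr rfl fun β hβ =>
          sum_herm_act_eq hact herm_unitary hSx hT (hSy.1 hβ) v w
    _ = S.card * ∑ γ ∈ T, herm (act v γ) w := by
        rw [Finset.sum_const, nsmul_eq_mul, IsRepsModulo.card_eq hSy hS]

end HeightPairing

theorem statement_11_general
    {F : Type*} [Field F] [NumberField F]
    {a b : F}
    (R : Subring ℍ[F, a, b])
    {V : Type*} [AddCommGroup V] [Module ℂ V]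
    (act : V → ℍ[F, a, b]ˣ → V) (hact : IsWeightRep F a b act)

    (herm : V → V → ℂ)
    (herm_add : ∀ v₁ v₂ w : V, herm (v₁ + v₂) w = herm v₁ w + herm v₂ w)
    (herm_conj : ∀ v w : V, herm w v = starRingEnd ℂ (herm v w))
    (herm_unitary : ∀ (v w : V) (γ : ℍ[F, a, b]ˣ), herm (act v γ) (act w γ) = herm v w)
    (x y : (Bhat F a b)ˣ) (v w : V)
    (xs : Finset (Bhat F a b)ˣ) (hcl : IsClassReps R xs)
    (Tx : (Bhat F a b)ˣ → Finset ℍ[F, a, b]ˣ)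
    (hTx : ∀ z ∈ xs, IsStabReps R z (Tx z))
    (φx : (Bhat F a b)ˣ → V) (hφx : IsPhi R act x v φx)
    (φy : (Bhat F a b)ˣ → V) (hφy : IsPhi R act y w φy)
    (T : Finset ℍ[F, a, b]ˣ) (hT : IsGammaReps R x y T) :
    ∑ z ∈ xs, ((Tx z).card : ℂ)⁻¹ * herm (φx z) (φy z)
      = ∑ γ ∈ T, herm (act v γ) w := by
  obtain ⟨z₀, hz₀, β₀, hβ₀⟩ := hcl.exists_mem_GammaSet y
  have herm_eq := fun {z S} (hS : IsGammaReps R y z S) =>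
    herm_apply_eq_card_mul hact herm_add herm_conj herm_unitary hφx hφy hS hT
  rw [Finset.sum_eq_single_of_mem z₀ hz₀ fun z hz hne => ?_]
  · obtain ⟨S, hS, -⟩ := hφy z₀
    have hcard : ((Tx z₀).card : ℂ) ≠ 0 := Nat.cast_ne_zero.mpr (hTx z₀ hz₀).nonempty.card_ne_zero
    rw [herm_eq hS, hS.card_eq_of_isStabReps (hTx z₀ hz₀) hβ₀, ← mul_assoc,
      inv_mul_cancel₀ hcard, one_mul]
  · obtain ⟨S, hS, -⟩ := hφy z
    have hS_empty : S = ∅ := Finset.eq_empty_of_forall_notMem fun β hβ =>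
      hne (hcl.eq_of_mem_GammaSet hz hz₀ (hS.1 hβ) hβ₀)
    rw [herm_eq hS, hS_empty, Finset.card_empty, Nat.cast_zero, zero_mul, mul_zero]

/-- `⟨⟨φ_{x,v}, φ_{y,w}⟩⟩ = Σ_{γ ∈ Γ_{x,y}} ⟨v·γ, w⟩`. -/
theorem statement_11
    {F : Type*} [Field F] [NumberField F]
    (htr : ∀ φ : F →+* ℂ, ∀ x : F, (φ x).im = 0)
    {a b : F} (ha0 : a ≠ 0) (hb0 : b ≠ 0)
    (ha : ∀ τ : F →+* ℝ, τ a < 0) (hb : ∀ τ : F →+* ℝ, τ b < 0)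
    (R : Subring ℍ[F, a, b])
    (hRO : ∀ c : NumberField.RingOfIntegers F,
      algebraMap F ℍ[F, a, b] (algebraMap (NumberField.RingOfIntegers F) F c) ∈ R)
    (hRfg : (Submodule.span (NumberField.RingOfIntegers F) (R : Set ℍ[F, a, b])).FG)
    (hRspan : Submodule.span F (R : Set ℍ[F, a, b]) = ⊤)
    {V : Type*} [AddCommGroup V] [Module ℂ V]
    (act : V → ℍ[F, a, b]ˣ → V) (hact : IsWeightRep F a b act)

    (herm : V → V → ℂ)
    (herm_add : ∀ v₁ v₂ w : V, herm (v₁ + v₂) w = herm v₁ w + herm v₂ w)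
    (herm_smul : ∀ (c : ℂ) (v w : V), herm (c • v) w = c * herm v w)
    (herm_conj : ∀ v w : V, herm w v = starRingEnd ℂ (herm v w))
    (herm_pos : ∀ v : V, v ≠ 0 → 0 < (herm v v).re)
    (herm_unitary : ∀ (v w : V) (γ : ℍ[F, a, b]ˣ), herm (act v γ) (act w γ) = herm v w)
    (x y : (Bhat F a b)ˣ) (v w : V)
    (xs : Finset (Bhat F a b)ˣ) (hcl : IsClassReps R xs)
    (Tx : (Bhat F a b)ˣ → Finset ℍ[F, a, b]ˣ)
    (hTx : ∀ z ∈ xs, IsStabReps R z (Tx z))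
    (hstab : ∀ z : (Bhat F a b)ˣ, ∃ T : Finset ℍ[F, a, b]ˣ, IsStabReps R z T)
    (hfinx : ∀ z : (Bhat F a b)ˣ, ∃ T : Finset ℍ[F, a, b]ˣ, IsGammaReps R x z T)
    (hfiny : ∀ z : (Bhat F a b)ˣ, ∃ T : Finset ℍ[F, a, b]ˣ, IsGammaReps R y z T)
    (φx : (Bhat F a b)ˣ → V) (hφx : IsPhi R act x v φx)
    (φy : (Bhat F a b)ˣ → V) (hφy : IsPhi R act y w φy)
    (T : Finset ℍ[F, a, b]ˣ) (hT : IsGammaReps R x y T) :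
    ∑ z ∈ xs, ((Tx z).card : ℂ)⁻¹ * herm (φx z) (φy z)
      = ∑ γ ∈ T, herm (act v γ) w :=
  statement_11_general R act hact herm herm_add herm_conj herm_unitary x y v w xs hcl Tx hTx φx hφx
    φy hφy T hT
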